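/- arXiv:1601.01550 — 2 statements merged into one kernel-verified Lean document; each statement's English description precedes it below -/
import Mathlib

section
/- With the decomposition and definition above, the Jacobian matrix 𝐅_m = (I − 𝐐) + m𝐕₁𝐔₁' + m𝕍₂𝕌₂' of f_m satisfies: 𝐅_m𝐕₁ = m𝐕₁, 𝐅_m𝕍₂ = 𝕍₂((1+m)I − 𝐉₂), and 𝐅_m𝕍₃ = 𝕍₃(I − 𝐉₃). Consequently the spectrum of 𝐅_m equals {m} ∪ {(1+m) − λ : λ eigenvalue of 𝐉₂} ∪ {1 − λ : λ eigenvalue of 𝐉₃}. -/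
/-!
The conjugate bases make `W = [V₁ V₂ V₃]` invertible with inverse `W' = [U₁'; U₂'; U₃']`:
biorthogonality gives `W' W = 1`, and since the columns of `V₁, V₂, V₃` span, `W` has a right
inverse, which then equals `W'`. The three column identities say `F W = W D` with `D` block
diagonal with blocks `m`, `(1 + m) I − J₂`, `I − J₃`; so `F` is similar to `D`, and the spectrum
of a block-diagonal matrix is the union of the spectra of its blocks.
-/

open Matrix

namespace Matrix

variable {R n ι κ : Type*} [CommRing R]

theorem spectrum_fromBlocks_zero [Fintype ι] [DecidableEq ι] [Fintype κ] [DecidableEq κ]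
    (A : Matrix ι ι R) (B : Matrix κ κ R) :
    spectrum R (fromBlocks A 0 0 B) = spectrum R A ∪ spectrum R B := by
  ext r
  have hsub : algebraMap R _ r - fromBlocks A 0 0 B =
      fromBlocks (algebraMap R _ r - A) 0 0 (algebraMap R _ r - B) := by
    simp only [Algebra.algebraMap_eq_smul_one, ← fromBlocks_one, fromBlocks_smul,
      sub_eq_add_neg, fromBlocks_neg, fromBlocks_add, neg_zero, add_zero, smul_zero]
  simp only [spectrum.mem_iff, Set.mem_union, hsub, isUnit_iff_isUnit_det,
    det_fromBlocks_zero₂₁, IsUnit.mul_iff, not_and_or]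

def conjAlgEquiv [Fintype n] [DecidableEq n] [Fintype ι] [DecidableEq ι] (W : Matrix n ι R)
    (W' : Matrix ι n R) (hWW' : W * W' = 1) (hW'W : W' * W = 1) :
    Matrix ι ι R ≃ₐ[R] Matrix n n R where
  toFun X := W * X * W'
  invFun Y := W' * Y * W
  left_inv X := by
    simp only [← Matrix.mul_assoc, hW'W, Matrix.one_mul]
    simp [Matrix.mul_assoc, hW'W]
  right_inv Y := by
    simp only [← Matrix.mul_assoc, hWW', Matrix.one_mul]
    simp [Matrix.mul_assoc, hWW']
  map_mul' X Y := by
    simp only [Matrix.mul_assoc]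
    simp [← Matrix.mul_assoc W' W, hW'W]
  map_add' X Y := by simp only [Matrix.mul_add, Matrix.add_mul]
  commutes' r := by simp [Algebra.algebraMap_eq_smul_one, hWW']

theorem spectrum_eq_of_mul_eq_mul [Fintype n] [DecidableEq n] [Fintype ι] [DecidableEq ι]
    {F : Matrix n n R} {D : Matrix ι ι R} {W : Matrix n ι R} {W' : Matrix ι n R}
    (hWW' : W * W' = 1) (hW'W : W' * W = 1) (h : F * W = W * D) :
    spectrum R F = spectrum R D := by
  have hF : conjAlgEquiv W W' hWW' hW'W D = F := by
    change W * D * W' = F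
    rw [← h, Matrix.mul_assoc, hWW', Matrix.mul_one]
  rw [← hF, AlgEquiv.spectrum_eq]

theorem exists_mul_eq_one_of_forall_exists_mul [DecidableEq n] [Fintype ι] {W : Matrix n ι R}
    (hW : ∀ x : Matrix n (Fin 1) R, ∃ y : Matrix ι (Fin 1) R, x = W * y) :
    ∃ Y : Matrix ι n R, W * Y = 1 := by
  choose y hy using fun j : n => hW (single j 0 1)
  refine ⟨of fun k j => y j k 0, ?_⟩
  ext i j
  simpa [mul_apply, one_apply, single_apply, eq_comm] using (congrFun (congrFun (hy j) i) 0).symm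

theorem mul_eq_one_of_mul_eq_one_of_forall_exists_mul [Fintype n] [DecidableEq n] [Fintype ι]
    [DecidableEq ι] {W : Matrix n ι R} {W' : Matrix ι n R}
    (hW'W : W' * W = 1) (hW : ∀ x : Matrix n (Fin 1) R, ∃ y : Matrix ι (Fin 1) R, x = W * y) :
    W * W' = 1 := by
  obtain ⟨Y, hY⟩ := exists_mul_eq_one_of_forall_exists_mul hW
  calc W * W' = W * W' * (W * Y) := by rw [hY, Matrix.mul_one]
    _ = W * (W' * W) * Y := by simp only [Matrix.mul_assoc]
    _ = 1 := by rw [hW'W, Matrix.mul_one, hY]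

theorem spectrum_eq_union_of_mul_fromCols [Fintype n] [DecidableEq n] [Fintype ι] [DecidableEq ι]
    [Fintype κ] [DecidableEq κ] {F : Matrix n n R} {A : Matrix n ι R} {B : Matrix n κ R}
    {A' : Matrix ι n R} {B' : Matrix κ n R} {DA : Matrix ι ι R} {DB : Matrix κ κ R}
    (hinv : fromRows A' B' * fromCols A B = 1) (hspan : fromCols A B * fromRows A' B' = 1)
    (hA : F * A = A * DA) (hB : F * B = B * DB) :
    spectrum R F = spectrum R DA ∪ spectrum R DB := by
  rw [← spectrum_fromBlocks_zero]
  refine spectrum_eq_of_mul_eq_mul hspan hinv ?_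
  rw [mul_fromCols, hA, hB, fromCols_mul_fromBlocks, Matrix.mul_zero, Matrix.mul_zero, add_zero,
    zero_add]

end Matrix

section Jacobian

variable {R n ι₁ ι₂ ι₃ : Type*} [CommRing R] [Fintype n] [DecidableEq n]
  [Fintype ι₁] [Fintype ι₂] [Fintype ι₃] {Q : Matrix n n R} {V1 U1 : Matrix n ι₁ R}
  {V2 U2 : Matrix n ι₂ R} {J2 : Matrix ι₂ ι₂ R} {V3 U3 : Matrix n ι₃ R} {J3 : Matrix ι₃ ι₃ R}

theorem jacobian_mul_V1 [DecidableEq ι₁]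
    (hdec : Q = V1 * U1ᵀ + V2 * J2 * U2ᵀ + V3 * J3 * U3ᵀ)
    (h11 : U1ᵀ * V1 = 1) (h21 : U2ᵀ * V1 = 0) (h31 : U3ᵀ * V1 = 0) (m : R) :
    (1 - Q + m • (V1 * U1ᵀ) + m • (V2 * U2ᵀ)) * V1 = m • V1 := by
  simp only [hdec, Matrix.add_mul, Matrix.sub_mul, Matrix.smul_mul, Matrix.mul_assoc, h11, h21,
    h31, Matrix.one_mul, Matrix.mul_one, Matrix.mul_zero]
  module

theorem jacobian_mul_V2 [DecidableEq ι₂]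
    (hdec : Q = V1 * U1ᵀ + V2 * J2 * U2ᵀ + V3 * J3 * U3ᵀ)
    (h12 : U1ᵀ * V2 = 0) (h22 : U2ᵀ * V2 = 1) (h32 : U3ᵀ * V2 = 0) (m : R) :
    (1 - Q + m • (V1 * U1ᵀ) + m • (V2 * U2ᵀ)) * V2 = V2 * ((1 + m) • 1 - J2) := by
  simp only [hdec, Matrix.add_mul, Matrix.sub_mul, Matrix.smul_mul, Matrix.mul_assoc, h12, h22,
    h32, Matrix.one_mul, Matrix.mul_one, Matrix.mul_zero, Matrix.mul_sub, Matrix.mul_smul]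
  module

theorem jacobian_mul_V3 [DecidableEq ι₃]
    (hdec : Q = V1 * U1ᵀ + V2 * J2 * U2ᵀ + V3 * J3 * U3ᵀ)
    (h13 : U1ᵀ * V3 = 0) (h23 : U2ᵀ * V3 = 0) (h33 : U3ᵀ * V3 = 1) (m : R) :
    (1 - Q + m • (V1 * U1ᵀ) + m • (V2 * U2ᵀ)) * V3 = V3 * (1 - J3) := by
  simp only [hdec, Matrix.add_mul, Matrix.sub_mul, Matrix.smul_mul, Matrix.mul_assoc, h13, h23,
    h33, Matrix.one_mul, Matrix.mul_one, Matrix.mul_zero, Matrix.mul_sub, smul_zero]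
  module

end Jacobian

theorem stmt_9_general {d p q : ℕ}
    (Q : Matrix (Fin d) (Fin d) ℂ)
    (V1 U1 : Matrix (Fin d) (Fin 1) ℂ)
    (V2 U2 : Matrix (Fin d) (Fin p) ℂ) (J2 : Matrix (Fin p) (Fin p) ℂ)
    (V3 U3 : Matrix (Fin d) (Fin q) ℂ) (J3 : Matrix (Fin q) (Fin q) ℂ)
    (hdec : Q = V1 * U1ᵀ + V2 * J2 * U2ᵀ + V3 * J3 * U3ᵀ)
    (h11 : U1ᵀ * V1 = 1) (h22 : U2ᵀ * V2 = 1) (h33 : U3ᵀ * V3 = 1)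
    (h12 : U1ᵀ * V2 = 0) (h13 : U1ᵀ * V3 = 0)
    (h21 : U2ᵀ * V1 = 0) (h23 : U2ᵀ * V3 = 0)
    (h31 : U3ᵀ * V1 = 0) (h32 : U3ᵀ * V2 = 0)
    (hspan : ∀ x : Matrix (Fin d) (Fin 1) ℂ, ∃ (a : ℂ) (b : Matrix (Fin p) (Fin 1) ℂ)
      (c : Matrix (Fin q) (Fin 1) ℂ), x = a • V1 + V2 * b + V3 * c)
    (m : ℝ) :
    (1 - Q + (m : ℂ) • (V1 * U1ᵀ) + (m : ℂ) • (V2 * U2ᵀ)) * V1 = (m : ℂ) • V1 ∧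
    (1 - Q + (m : ℂ) • (V1 * U1ᵀ) + (m : ℂ) • (V2 * U2ᵀ)) * V2 =
      V2 * ((1 + (m : ℂ)) • 1 - J2) ∧
    (1 - Q + (m : ℂ) • (V1 * U1ᵀ) + (m : ℂ) • (V2 * U2ᵀ)) * V3 = V3 * (1 - J3) ∧
    spectrum ℂ (1 - Q + (m : ℂ) • (V1 * U1ᵀ) + (m : ℂ) • (V2 * U2ᵀ)) =
      {(m : ℂ)} ∪ (fun lam => 1 + (m : ℂ) - lam) '' spectrum ℂ J2
        ∪ (fun lam => 1 - lam) '' spectrum ℂ J3 := by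
  have hF1 := jacobian_mul_V1 hdec h11 h21 h31 (m : ℂ)
  have hF2 := jacobian_mul_V2 hdec h12 h22 h32 (m : ℂ)
  have hF3 := jacobian_mul_V3 hdec h13 h23 h33 (m : ℂ)
  refine ⟨hF1, hF2, hF3, ?_⟩
  set F := 1 - Q + (m : ℂ) • (V1 * U1ᵀ) + (m : ℂ) • (V2 * U2ᵀ)
  have hUV : fromRows U1ᵀ (fromRows U2ᵀ U3ᵀ) * fromCols V1 (fromCols V2 V3) = 1 := by
    rw [fromRows_mul_fromCols, fromRows_mul_fromCols, mul_fromCols, fromRows_mul, h11, h12, h13,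
      h21, h22, h23, h31, h32, h33, fromCols_zero, fromRows_zero, fromBlocks_one, fromBlocks_one]
  have hVU : fromCols V1 (fromCols V2 V3) * fromRows U1ᵀ (fromRows U2ᵀ U3ᵀ) = 1 := by
    refine mul_eq_one_of_mul_eq_one_of_forall_exists_mul hUV fun x => ?_
    obtain ⟨a, b, c, rfl⟩ := hspan x
    exact ⟨fromRows (a • 1) (fromRows b c), by simp [fromCols_mul_fromRows, add_assoc]⟩
  have hV1 : F * V1 = V1 * algebraMap ℂ (Matrix (Fin 1) (Fin 1) ℂ) m := by
    rw [hF1, Algebra.algebraMap_eq_smul_one, Matrix.mul_smul, Matrix.mul_one]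
  have hV23 : F * fromCols V2 V3 = fromCols V2 V3 *
      fromBlocks (algebraMap ℂ _ (1 + (m : ℂ)) - J2) 0 0 (algebraMap ℂ _ 1 - J3) := by
    rw [mul_fromCols, hF2, hF3, fromCols_mul_fromBlocks]
    simp [Algebra.algebraMap_eq_smul_one]
  rw [spectrum_eq_union_of_mul_fromCols hUV hVU hV1 hV23, spectrum_fromBlocks_zero,
    spectrum.scalar_eq, ← spectrum.singleton_sub_eq, ← spectrum.singleton_sub_eq,
    Set.singleton_sub, Set.singleton_sub, Set.union_assoc]

/-- the Jacobian `𝐅_m = (I − 𝐐) + m𝐕₁𝐔₁' + m𝕍₂𝕌₂'` satisfies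
`𝐅_m𝐕₁ = m𝐕₁`, `𝐅_m𝕍₂ = 𝕍₂((1+m)I − 𝐉₂)`, `𝐅_m𝕍₃ = 𝕍₃(I − 𝐉₃)`, and its
spectrum is `{m} ∪ {(1+m) − λ : λ ∈ Sp(𝐉₂)} ∪ {1 − λ : λ ∈ Sp(𝐉₃)}`. -/
theorem stmt_9 {d p q : ℕ}
    (Q : Matrix (Fin d) (Fin d) ℂ)
    (V1 U1 : Matrix (Fin d) (Fin 1) ℂ)
    (V2 U2 : Matrix (Fin d) (Fin p) ℂ) (J2 : Matrix (Fin p) (Fin p) ℂ)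
    (V3 U3 : Matrix (Fin d) (Fin q) ℂ) (J3 : Matrix (Fin q) (Fin q) ℂ)
    (hdec : Q = V1 * U1ᵀ + V2 * J2 * U2ᵀ + V3 * J3 * U3ᵀ)
    (h11 : U1ᵀ * V1 = 1) (h22 : U2ᵀ * V2 = 1) (h33 : U3ᵀ * V3 = 1)
    (h12 : U1ᵀ * V2 = 0) (h13 : U1ᵀ * V3 = 0)
    (h21 : U2ᵀ * V1 = 0) (h23 : U2ᵀ * V3 = 0)
    (h31 : U3ᵀ * V1 = 0) (h32 : U3ᵀ * V2 = 0)
    (hspan : ∀ x : Matrix (Fin d) (Fin 1) ℂ, ∃ (a : ℂ) (b : Matrix (Fin p) (Fin 1) ℂ)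
      (c : Matrix (Fin q) (Fin 1) ℂ), x = a • V1 + V2 * b + V3 * c)
    (m : ℝ) (hm : 0 < m) :
    (1 - Q + (m : ℂ) • (V1 * U1ᵀ) + (m : ℂ) • (V2 * U2ᵀ)) * V1 = (m : ℂ) • V1 ∧
    (1 - Q + (m : ℂ) • (V1 * U1ᵀ) + (m : ℂ) • (V2 * U2ᵀ)) * V2 =
      V2 * ((1 + (m : ℂ)) • 1 - J2) ∧
    (1 - Q + (m : ℂ) • (V1 * U1ᵀ) + (m : ℂ) • (V2 * U2ᵀ)) * V3 = V3 * (1 - J3) ∧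
    spectrum ℂ (1 - Q + (m : ℂ) • (V1 * U1ᵀ) + (m : ℂ) • (V2 * U2ᵀ)) =
      {(m : ℂ)} ∪ (fun lam => 1 + (m : ℂ) - lam) '' spectrum ℂ J2
        ∪ (fun lam => 1 - lam) '' spectrum ℂ J3 :=
  stmt_9_general Q V1 U1 V2 U2 J2 V3 U3 J3 hdec h11 h22 h33 h12 h13 h21 h23 h31 h32 hspan m
end

section
/- With the decomposition above, if m > 0 and every eigenvalue λ of 𝐉₃ satisfies Re(λ) < 1, then every eigenvalue of 𝐅_m = (I − 𝐐) + m𝐕₁𝐔₁' + m𝕍₂𝕌₂' has strictly positive real part (provided additionally Re(λ) < 1 + m for every eigenvalue λ of 𝐉₂). -/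
/-!
An eigenvector `x` of `𝐅_m` splits as `x = 𝐕₁ a + 𝕍₂ b + 𝕍₃ c`, and the dual bases recover the
coordinates: `𝐔₁' x = a`, `𝕌₂' x = b`, `𝕌₃' x = c`. Each dual basis intertwines `𝐅_m` with a
small matrix, `𝐔₁' 𝐅_m = m 𝐔₁'`, `𝕌₂' 𝐅_m = ((1 + m) I − 𝐉₂) 𝕌₂'`, `𝕌₃' 𝐅_m = (I − 𝐉₃) 𝕌₃'`,
so a nonzero coordinate forces `λ = m`, `1 + m − λ ∈ σ(𝐉₂)` or `1 − λ ∈ σ(𝐉₃)`; in each case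
the bounds on the real parts of `σ(𝐉₂)` and `σ(𝐉₃)` make `Re λ` positive.
-/

open Matrix
open scoped Pointwise

namespace Matrix

variable {K n : Type*} [Field K] [Fintype n]

theorem mem_spectrum_iff_exists_mul_eq_smul [DecidableEq n] {ι : Type*} [Nonempty ι]
    {M : Matrix n n K} {μ : K} :
    μ ∈ spectrum K M ↔ ∃ X : Matrix n ι K, X ≠ 0 ∧ M * X = μ • X := by
  rw [← spectrum_toLin', ← Module.End.hasEigenvalue_iff_mem_spectrum]
  constructor
  · intro h
    obtain ⟨v, hv, hv0⟩ := h.exists_hasEigenvector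
    rw [Module.End.mem_eigenspace_iff, toLin'_apply] at hv
    refine ⟨replicateCol ι v, by simpa using hv0, ?_⟩
    rw [← replicateCol_mulVec, hv, replicateCol_smul]
  · rintro ⟨X, hX0, hMX⟩
    obtain ⟨j, hj⟩ : ∃ j, X.col j ≠ 0 := by
      by_contra! h
      exact hX0 (ext_col h)
    refine Module.End.hasEigenvalue_of_hasEigenvector (x := X.col j) ⟨?_, hj⟩
    rw [Module.End.mem_eigenspace_iff, toLin'_apply]
    funext i
    simpa [mulVec, dotProduct, mul_apply] using congrFun (congrFun hMX i) j

theorem mem_spectrum_of_mul_eq_mul {m ι : Type*} [Fintype m] [DecidableEq m] [Fintype ι]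
    {A : Matrix m n K} {F : Matrix n n K} {G : Matrix m m K} (hAF : A * F = G * A)
    {X : Matrix n ι K} {μ : K} (hFX : F * X = μ • X) (hAX : A * X ≠ 0) :
    μ ∈ spectrum K G := by
  have : Nonempty ι := by
    by_contra! h
    exact hAX (Subsingleton.elim _ _)
  refine mem_spectrum_iff_exists_mul_eq_smul.mpr ⟨A * X, hAX, ?_⟩
  rw [← Matrix.mul_assoc, ← hAF, Matrix.mul_assoc, hFX, Matrix.mul_smul]

end Matrix

section Decomposition

variable {K n ι₁ ι₂ ι₃ : Type*} [Field K] [Fintype n] [Fintype ι₁] [Fintype ι₂] [Fintype ι₃]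
  {Q : Matrix n n K} {V1 U1 : Matrix n ι₁ K} {V2 U2 : Matrix n ι₂ K} {J2 : Matrix ι₂ ι₂ K}
  {V3 U3 : Matrix n ι₃ K} {J3 : Matrix ι₃ ι₃ K}

theorem transpose_mul_eq_of_eq_add [DecidableEq ι₁] [DecidableEq ι₂] [DecidableEq ι₃]
    (h11 : U1ᵀ * V1 = 1) (h12 : U1ᵀ * V2 = 0) (h13 : U1ᵀ * V3 = 0)
    (h21 : U2ᵀ * V1 = 0) (h22 : U2ᵀ * V2 = 1) (h23 : U2ᵀ * V3 = 0)
    (h31 : U3ᵀ * V1 = 0) (h32 : U3ᵀ * V2 = 0) (h33 : U3ᵀ * V3 = 1) {ι : Type*}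
    {X : Matrix n ι K} {A : Matrix ι₁ ι K} {B : Matrix ι₂ ι K} {C : Matrix ι₃ ι K}
    (hX : X = V1 * A + V2 * B + V3 * C) : U1ᵀ * X = A ∧ U2ᵀ * X = B ∧ U3ᵀ * X = C := by
  subst hX
  simp only [Matrix.mul_add, ← Matrix.mul_assoc, h11, h12, h13, h21, h22, h23, h31, h32, h33,
    Matrix.zero_mul, Matrix.one_mul, add_zero, zero_add, and_self]

theorem first_block_intertwines [DecidableEq n] [DecidableEq ι₁]
    (hdec : Q = V1 * U1ᵀ + V2 * J2 * U2ᵀ + V3 * J3 * U3ᵀ)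
    (h11 : U1ᵀ * V1 = 1) (h12 : U1ᵀ * V2 = 0) (h13 : U1ᵀ * V3 = 0) (m : K) :
    U1ᵀ * (1 - Q + m • (V1 * U1ᵀ) + m • (V2 * U2ᵀ)) =
      algebraMap K (Matrix ι₁ ι₁ K) m * U1ᵀ := by
  subst hdec
  simp only [Matrix.mul_add, Matrix.mul_sub, Matrix.mul_one, Matrix.mul_smul, ← Matrix.mul_assoc,
    h11, h12, h13, Matrix.zero_mul, Matrix.one_mul, Algebra.algebraMap_eq_smul_one,
    Matrix.smul_mul, smul_zero]
  abel

theorem second_block_intertwines [DecidableEq n] [DecidableEq ι₂]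
    (hdec : Q = V1 * U1ᵀ + V2 * J2 * U2ᵀ + V3 * J3 * U3ᵀ)
    (h21 : U2ᵀ * V1 = 0) (h22 : U2ᵀ * V2 = 1) (h23 : U2ᵀ * V3 = 0) (m : K) :
    U2ᵀ * (1 - Q + m • (V1 * U1ᵀ) + m • (V2 * U2ᵀ)) =
      (algebraMap K (Matrix ι₂ ι₂ K) (1 + m) - J2) * U2ᵀ := by
  subst hdec
  simp only [Matrix.mul_add, Matrix.mul_sub, Matrix.mul_one, Matrix.mul_smul, ← Matrix.mul_assoc,
    h21, h22, h23, Matrix.zero_mul, Matrix.one_mul, map_add, map_one,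
    Algebra.algebraMap_eq_smul_one, Matrix.smul_mul, Matrix.sub_mul, Matrix.add_mul, smul_zero]
  abel

theorem third_block_intertwines [DecidableEq n] [DecidableEq ι₃]
    (hdec : Q = V1 * U1ᵀ + V2 * J2 * U2ᵀ + V3 * J3 * U3ᵀ)
    (h31 : U3ᵀ * V1 = 0) (h32 : U3ᵀ * V2 = 0) (h33 : U3ᵀ * V3 = 1) (m : K) :
    U3ᵀ * (1 - Q + m • (V1 * U1ᵀ) + m • (V2 * U2ᵀ)) = (1 - J3) * U3ᵀ := by
  subst hdec
  simp only [Matrix.mul_add, Matrix.mul_sub, Matrix.mul_one, Matrix.mul_smul, ← Matrix.mul_assoc,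
    h31, h32, h33, Matrix.zero_mul, Matrix.one_mul, Matrix.sub_mul, smul_zero]
  abel

theorem spectrum_subset_of_decomposition [DecidableEq n] [DecidableEq ι₁] [Nonempty ι₁]
    [DecidableEq ι₂] [DecidableEq ι₃] (hdec : Q = V1 * U1ᵀ + V2 * J2 * U2ᵀ + V3 * J3 * U3ᵀ)
    (h11 : U1ᵀ * V1 = 1) (h12 : U1ᵀ * V2 = 0) (h13 : U1ᵀ * V3 = 0)
    (h21 : U2ᵀ * V1 = 0) (h22 : U2ᵀ * V2 = 1) (h23 : U2ᵀ * V3 = 0)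
    (h31 : U3ᵀ * V1 = 0) (h32 : U3ᵀ * V2 = 0) (h33 : U3ᵀ * V3 = 1)
    (hspan : ∀ X : Matrix n (Fin 1) K, ∃ (A : Matrix ι₁ (Fin 1) K) (B : Matrix ι₂ (Fin 1) K)
      (C : Matrix ι₃ (Fin 1) K), X = V1 * A + V2 * B + V3 * C) (m : K) :
    spectrum K (1 - Q + m • (V1 * U1ᵀ) + m • (V2 * U2ᵀ)) ⊆
      {m} ∪ ({1 + m} - spectrum K J2) ∪ ({1} - spectrum K J3) := by
  intro μ hμ
  obtain ⟨X, hX0, hFX⟩ := (mem_spectrum_iff_exists_mul_eq_smul (ι := Fin 1)).mp hμ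
  obtain ⟨A, B, C, hX⟩ := hspan X
  obtain ⟨hA, hB, hC⟩ := transpose_mul_eq_of_eq_add h11 h12 h13 h21 h22 h23 h31 h32 h33 hX
  by_cases hA0 : A = 0
  · by_cases hB0 : B = 0
    · have hC0 : C ≠ 0 := by
        rintro rfl
        exact hX0 (by simp [hX, hA0, hB0])
      right
      rw [spectrum.singleton_sub_eq, map_one]
      exact mem_spectrum_of_mul_eq_mul (third_block_intertwines hdec h31 h32 h33 m) hFX
        (hC ▸ hC0)
    · left; right
      rw [spectrum.singleton_sub_eq]
      exact mem_spectrum_of_mul_eq_mul (second_block_intertwines hdec h21 h22 h23 m) hFX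
        (hB ▸ hB0)
  · left; left
    rw [← spectrum.scalar_eq (A := Matrix ι₁ ι₁ K)]
    exact mem_spectrum_of_mul_eq_mul (first_block_intertwines hdec h11 h12 h13 m) hFX (hA ▸ hA0)

end Decomposition

/-- if `m > 0`, every eigenvalue of `𝐉₃` has real part `< 1`, and
every eigenvalue of `𝐉₂` has real part `< 1 + m`, then every eigenvalue of
`𝐅_m = (I − 𝐐) + m𝐕₁𝐔₁' + m𝕍₂𝕌₂'` has strictly positive real part. -/
theorem stmt_10 {d p q : ℕ}
    (Q : Matrix (Fin d) (Fin d) ℂ)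
    (V1 U1 : Matrix (Fin d) (Fin 1) ℂ)
    (V2 U2 : Matrix (Fin d) (Fin p) ℂ) (J2 : Matrix (Fin p) (Fin p) ℂ)
    (V3 U3 : Matrix (Fin d) (Fin q) ℂ) (J3 : Matrix (Fin q) (Fin q) ℂ)
    (hdec : Q = V1 * U1ᵀ + V2 * J2 * U2ᵀ + V3 * J3 * U3ᵀ)
    (h11 : U1ᵀ * V1 = 1) (h22 : U2ᵀ * V2 = 1) (h33 : U3ᵀ * V3 = 1)
    (h12 : U1ᵀ * V2 = 0) (h13 : U1ᵀ * V3 = 0)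
    (h21 : U2ᵀ * V1 = 0) (h23 : U2ᵀ * V3 = 0)
    (h31 : U3ᵀ * V1 = 0) (h32 : U3ᵀ * V2 = 0)
    (hspan : ∀ x : Matrix (Fin d) (Fin 1) ℂ, ∃ (a : ℂ) (b : Matrix (Fin p) (Fin 1) ℂ)
      (c : Matrix (Fin q) (Fin 1) ℂ), x = a • V1 + V2 * b + V3 * c)
    (m : ℝ) (hm : 0 < m)
    (hJ3 : ∀ lam ∈ spectrum ℂ J3, lam.re < 1)
    (hJ2 : ∀ lam ∈ spectrum ℂ J2, lam.re < 1 + m) :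
    ∀ lam ∈ spectrum ℂ (1 - Q + (m : ℂ) • (V1 * U1ᵀ) + (m : ℂ) • (V2 * U2ᵀ)),
      0 < lam.re := by
  intro lam hlam
  have hspan' : ∀ X : Matrix (Fin d) (Fin 1) ℂ, ∃ (A : Matrix (Fin 1) (Fin 1) ℂ)
      (B : Matrix (Fin p) (Fin 1) ℂ) (C : Matrix (Fin q) (Fin 1) ℂ),
      X = V1 * A + V2 * B + V3 * C := fun X => by
    obtain ⟨a, b, c, hX⟩ := hspan X
    exact ⟨a • 1, b, c, by rw [hX, Matrix.mul_smul, Matrix.mul_one]⟩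
  rcases spectrum_subset_of_decomposition hdec h11 h12 h13 h21 h22 h23 h31 h32 h33 hspan' (m : ℂ)
    hlam with (rfl | ⟨_, rfl, μ, hμ, rfl⟩) | ⟨_, rfl, μ, hμ, rfl⟩
  · simpa using hm
  · have := hJ2 μ hμ
    simp only [Complex.sub_re, Complex.add_re, Complex.one_re, Complex.ofReal_re]
    linarith
  · have := hJ3 μ hμ
    simp only [Complex.sub_re, Complex.one_re]
    linarith
end
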